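/- Let N ≥ 2, let h, g ∈ ℂ^N be nonzero, let σ > 0, let a, b ≥ 0, and let 0 ≤ P_s ≤ P₀. Set u₁ = g/‖g‖, u₂ = h/‖h‖, ζ = |⟨u₁, u₂⟩|, and L(z) = 1 − (ζ√(1−z) − √((1−ζ²)z))² for z ∈ [0, 1]. Then the supremum over unit vectors x ∈ ℂ^N of [σ² + a + (P₀ − P_s)‖h‖²|⟨u₂, x⟩|²] / [σ² + b + (P₀ − P_s)‖g‖²|⟨u₁, x⟩|²] equals the maximum over z ∈ [0, 1] of [σ² + a + (P₀ − P_s)‖h‖² L(z)] / [σ² + b + (P₀ − P_s)‖g‖² z], and this supremum is attained. -/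

import Mathlib

/-! Split every vector into its component along `u₁` and the rest. With `z = |⟨u₁, x⟩|²`,
Cauchy–Schwarz on the parts orthogonal to `u₁` gives
`|⟨u₂, x⟩| ≤ ζ √z + √(1 - ζ²) √(1 - z)`, and the bound is attained by a unit vector in a plane
through `u₁` and `u₂` (such a plane exists because `N ≥ 2`). The square of the bound is `L z`
and the ratio increases with its numerator, so the supremum over `x` is the maximum over
`z ∈ [0, 1]` of a continuous function, which exists by compactness. -/

open scoped InnerProductSpace ComplexConjugate
open Module

section UnitVector

variable {𝕜 E : Type*} [RCLike 𝕜] [NormedAddCommGroup E] [InnerProductSpace 𝕜 E] {u v : E}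

theorem inner_sub_inner_smul_eq_zero (hu : ‖u‖ = 1) (x : E) :
    ⟪u, x - ⟪u, x⟫_𝕜 • u⟫_𝕜 = 0 := by
  rw [inner_sub_right, inner_smul_right, inner_self_eq_one_of_norm_eq_one hu, mul_one, sub_self]

theorem norm_sub_inner_smul_sq (hu : ‖u‖ = 1) (x : E) :
    ‖x - ⟪u, x⟫_𝕜 • u‖ ^ 2 = ‖x‖ ^ 2 - ‖⟪u, x⟫_𝕜‖ ^ 2 := by
  have h := norm_add_sq_eq_norm_sq_add_norm_sq_of_inner_eq_zero (𝕜 := 𝕜) (⟪u, x⟫_𝕜 • u)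
    (x - ⟪u, x⟫_𝕜 • u) (by rw [inner_smul_left, inner_sub_inner_smul_eq_zero hu, mul_zero])
  rw [add_sub_cancel, norm_smul, hu, mul_one] at h
  linarith

theorem inner_eq_conj_mul_add_inner_sub_inner_smul (hu : ‖u‖ = 1) (v x : E) :
    ⟪v, x⟫_𝕜 = conj ⟪u, v⟫_𝕜 * ⟪u, x⟫_𝕜 + ⟪v - ⟪u, v⟫_𝕜 • u, x - ⟪u, x⟫_𝕜 • u⟫_𝕜 := by
  simp only [inner_sub_left, inner_sub_right, inner_smul_left, inner_smul_right,
    inner_self_eq_one_of_norm_eq_one hu, inner_conj_symm]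
  ring

theorem norm_inner_le_of_norm_eq_one (hu : ‖u‖ = 1) (v x : E) :
    ‖⟪v, x⟫_𝕜‖ ≤ ‖⟪u, v⟫_𝕜‖ * ‖⟪u, x⟫_𝕜‖ +
      √(‖v‖ ^ 2 - ‖⟪u, v⟫_𝕜‖ ^ 2) * √(‖x‖ ^ 2 - ‖⟪u, x⟫_𝕜‖ ^ 2) := by
  rw [← norm_sub_inner_smul_sq hu v, ← norm_sub_inner_smul_sq hu x,
    Real.sqrt_sq (norm_nonneg _), Real.sqrt_sq (norm_nonneg _),
    inner_eq_conj_mul_add_inner_sub_inner_smul hu v x]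
  calc _ ≤ ‖conj ⟪u, v⟫_𝕜 * ⟪u, x⟫_𝕜‖ + ‖⟪v - ⟪u, v⟫_𝕜 • u, x - ⟪u, x⟫_𝕜 • u⟫_𝕜‖ :=
        norm_add_le _ _
    _ ≤ _ := by
      rw [norm_mul, RCLike.norm_conj]
      gcongr
      exact norm_inner_le_norm _ _

theorem exists_norm_eq_one_inner_eq_zero (hE : 1 < finrank 𝕜 E) (u : E) :
    ∃ w : E, ‖w‖ = 1 ∧ ⟪u, w⟫_𝕜 = 0 := by
  have : FiniteDimensional 𝕜 E := Module.finite_of_finrank_pos (by omega)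
  have hspan : finrank 𝕜 (𝕜 ∙ u) ≤ 1 := (finrank_span_le_card ({u} : Set E)).trans (by simp)
  have hperp : (𝕜 ∙ u)ᗮ ≠ ⊥ := by
    intro hbot
    have := (𝕜 ∙ u).finrank_add_finrank_orthogonal
    rw [hbot, finrank_bot] at this
    omega
  obtain ⟨w, hw, hw0⟩ := Submodule.exists_mem_ne_zero_of_ne_bot hperp
  refine ⟨(‖w‖⁻¹ : 𝕜) • w, norm_smul_inv_norm hw0, ?_⟩
  rw [inner_smul_right, Submodule.mem_orthogonal_singleton_iff_inner_right.1 hw, mul_zero]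

theorem exists_norm_eq_one_inner_eq_sqrt (hE : 1 < finrank 𝕜 E) (hu : ‖u‖ = 1) (v : E) :
    ∃ e : E, ‖e‖ = 1 ∧ ⟪u, e⟫_𝕜 = 0 ∧ ⟪v, e⟫_𝕜 = √(‖v‖ ^ 2 - ‖⟪u, v⟫_𝕜‖ ^ 2) := by
  rw [← norm_sub_inner_smul_sq hu v, Real.sqrt_sq (norm_nonneg _)]
  set w := v - ⟪u, v⟫_𝕜 • u
  have huw : ⟪u, w⟫_𝕜 = 0 := inner_sub_inner_smul_eq_zero hu v
  have hvw (y : E) (hy : ⟪u, y⟫_𝕜 = 0) : ⟪v, y⟫_𝕜 = ⟪w, y⟫_𝕜 := by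
    rw [inner_sub_left, inner_smul_left, hy, mul_zero, sub_zero]
  by_cases hw : w = 0
  · obtain ⟨e, he, hue⟩ := exists_norm_eq_one_inner_eq_zero hE u
    refine ⟨e, he, hue, ?_⟩
    rw [hvw e hue, hw, inner_zero_left, norm_zero, RCLike.ofReal_zero]
  · refine ⟨(‖w‖⁻¹ : 𝕜) • w, norm_smul_inv_norm hw, ?_, ?_⟩
    · rw [inner_smul_right, huw, mul_zero]
    · have hw' : (‖w‖ : 𝕜) ≠ 0 := RCLike.ofReal_ne_zero.2 (norm_ne_zero_iff.2 hw)
      rw [hvw _ (by rw [inner_smul_right, huw, mul_zero]), inner_smul_right,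
        inner_self_eq_norm_sq_to_K]
      field_simp

theorem exists_norm_eq_one_conj_mul_eq_norm (c : 𝕜) :
    ∃ φ : 𝕜, ‖φ‖ = 1 ∧ conj c * φ = ‖c‖ := by
  by_cases hc : c = 0
  · exact ⟨1, norm_one, by simp [hc]⟩
  · have hc' : (‖c‖ : 𝕜) ≠ 0 := RCLike.ofReal_ne_zero.2 (norm_ne_zero_iff.2 hc)
    refine ⟨c / ‖c‖, by simp [norm_ne_zero_iff.2 hc], ?_⟩
    rw [mul_div_assoc', RCLike.conj_mul]
    field_simp

theorem exists_norm_eq_one_norm_inner_eq (hE : 1 < finrank 𝕜 E) (hu : ‖u‖ = 1) (hv : ‖v‖ = 1)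
    {z : ℝ} (hz₀ : 0 ≤ z) (hz₁ : z ≤ 1) :
    ∃ x : E, ‖x‖ = 1 ∧ ‖⟪u, x⟫_𝕜‖ ^ 2 = z ∧
      ‖⟪v, x⟫_𝕜‖ = ‖⟪u, v⟫_𝕜‖ * √z + √(1 - ‖⟪u, v⟫_𝕜‖ ^ 2) * √(1 - z) := by
  obtain ⟨e, he, hue, hve⟩ := exists_norm_eq_one_inner_eq_sqrt hE hu v
  obtain ⟨φ, hφ, hcφ⟩ := exists_norm_eq_one_conj_mul_eq_norm ⟪u, v⟫_𝕜
  rw [hv, one_pow] at hve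
  have hcross : ⟪((√z : 𝕜) * φ) • u, (√(1 - z) : 𝕜) • e⟫_𝕜 = 0 := by
    rw [inner_smul_left, inner_smul_right, hue, mul_zero, mul_zero]
  have hnorm : ‖((√z : 𝕜) * φ) • u‖ ^ 2 + ‖(√(1 - z) : 𝕜) • e‖ ^ 2 = 1 := by
    simp only [norm_smul, norm_mul, hφ, hu, he, RCLike.norm_ofReal, abs_of_nonneg
      (Real.sqrt_nonneg _), mul_one, Real.sq_sqrt hz₀, Real.sq_sqrt (sub_nonneg.2 hz₁)]
    ring
  refine ⟨((√z : 𝕜) * φ) • u + (√(1 - z) : 𝕜) • e, ?_, ?_, ?_⟩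
  · rw [← pow_eq_one_iff_of_nonneg (norm_nonneg _) two_ne_zero, norm_add_sq (𝕜 := 𝕜), hcross,
      map_zero, mul_zero, add_zero, hnorm]
  · rw [inner_add_right, inner_smul_right, inner_smul_right, inner_self_eq_one_of_norm_eq_one hu,
      hue, mul_zero, add_zero, mul_one, norm_mul, hφ, mul_one, RCLike.norm_ofReal,
      abs_of_nonneg (Real.sqrt_nonneg _), Real.sq_sqrt hz₀]
  · rw [inner_add_right, inner_smul_right, inner_smul_right, hve, ← inner_conj_symm v u,
      mul_assoc, mul_comm φ, hcφ, ← RCLike.ofReal_mul, ← RCLike.ofReal_mul, ← RCLike.ofReal_add,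
      RCLike.norm_of_nonneg (by positivity)]
    ring

end UnitVector

/-- With `ζ = cos α` and `√z = sin β` the two squares are `cos² (α + β)` and `sin² (α + β)`. -/
theorem one_sub_sq_sub_eq_sq_add {ζ z : ℝ} (hζ₀ : 0 ≤ ζ) (hζ₁ : ζ ≤ 1) (hz₀ : 0 ≤ z)
    (hz₁ : z ≤ 1) :
    1 - (ζ * √(1 - z) - √((1 - ζ ^ 2) * z)) ^ 2 = (ζ * √z + √(1 - ζ ^ 2) * √(1 - z)) ^ 2 := by
  have hζ : 0 ≤ 1 - ζ ^ 2 := by nlinarith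
  rw [Real.sqrt_mul hζ]
  linear_combination -(ζ ^ 2 + √(1 - ζ ^ 2) ^ 2) *
      (Real.sq_sqrt hz₀ + Real.sq_sqrt (sub_nonneg.2 hz₁)) - Real.sq_sqrt hζ

theorem exists_isGreatest_of_le_of_attained {X Y β : Type*} [TopologicalSpace Y] [LinearOrder β]
    [TopologicalSpace β] [ClosedIciTopology β] {P : X → Prop} {r : X → β} {q : X → Y}
    {f : Y → β} {s : Set Y} (hs : IsCompact s) (hne : s.Nonempty) (hf : ContinuousOn f s)
    (hq : ∀ x, P x → q x ∈ s) (hle : ∀ x, P x → r x ≤ f (q x))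
    (hattain : ∀ z ∈ s, ∃ x, P x ∧ r x = f z) :
    ∃ m, IsGreatest {v | ∃ x, P x ∧ v = r x} m ∧ IsGreatest {v | ∃ z ∈ s, v = f z} m := by
  obtain ⟨z₀, hz₀, hmax⟩ := hs.exists_isMaxOn hne hf
  obtain ⟨x₀, hx₀, hrx₀⟩ := hattain z₀ hz₀
  refine ⟨f z₀, ⟨⟨x₀, hx₀, hrx₀.symm⟩, ?_⟩, ⟨z₀, hz₀, rfl⟩, ?_⟩
  · rintro _ ⟨x, hx, rfl⟩
    exact (hle x hx).trans (hmax (hq x hx))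
  · rintro _ ⟨z, hz, rfl⟩
    exact hmax hz

theorem stmt6_general {N : ℕ} (hN : 2 ≤ N)
    (h g : EuclideanSpace ℂ (Fin N)) (hh : h ≠ 0) (hg : g ≠ 0)
    (σ a b Ps P₀ : ℝ) (hσ : 0 < σ) (hb : 0 ≤ b)
    (hPsP : Ps ≤ P₀)
    (ζ : ℝ) (hζ : ζ = ‖(inner ℂ (‖g‖⁻¹ • g) (‖h‖⁻¹ • h) : ℂ)‖)
    (L : ℝ → ℝ)
    (hL : ∀ z, L z = 1 - (ζ * Real.sqrt (1 - z) - Real.sqrt ((1 - ζ ^ 2) * z)) ^ 2) :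
    ∃ m : ℝ,
      IsGreatest {v : ℝ | ∃ x : EuclideanSpace ℂ (Fin N), ‖x‖ = 1 ∧
        v = (σ ^ 2 + a + (P₀ - Ps) * ‖h‖ ^ 2 *
              ‖(inner ℂ (‖h‖⁻¹ • h) x : ℂ)‖ ^ 2) /
            (σ ^ 2 + b + (P₀ - Ps) * ‖g‖ ^ 2 *
              ‖(inner ℂ (‖g‖⁻¹ • g) x : ℂ)‖ ^ 2)} m ∧
      IsGreatest {v : ℝ | ∃ z ∈ Set.Icc (0 : ℝ) 1,
        v = (σ ^ 2 + a + (P₀ - Ps) * ‖h‖ ^ 2 * L z) /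
            (σ ^ 2 + b + (P₀ - Ps) * ‖g‖ ^ 2 * z)} m := by
  set u₁ : EuclideanSpace ℂ (Fin N) := ‖g‖⁻¹ • g
  set u₂ : EuclideanSpace ℂ (Fin N) := ‖h‖⁻¹ • h
  have hu₁ : ‖u₁‖ = 1 := norm_smul_inv_norm hg
  have hu₂ : ‖u₂‖ = 1 := norm_smul_inv_norm hh
  have hE : 1 < finrank ℂ (EuclideanSpace ℂ (Fin N)) := by rw [finrank_euclideanSpace_fin]; omega
  have hnorm_inner_le {x : EuclideanSpace ℂ (Fin N)} (hx : ‖x‖ = 1) : ‖⟪u₁, x⟫_ℂ‖ ≤ 1 :=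
    (norm_inner_le_norm u₁ x).trans (by rw [hu₁, hx, one_mul])
  have hL_sq : ∀ z ∈ Set.Icc (0 : ℝ) 1, L z = (ζ * √z + √(1 - ζ ^ 2) * √(1 - z)) ^ 2 :=
    fun z hz ↦ (hL z).trans <|
      one_sub_sq_sub_eq_sq_add (hζ ▸ norm_nonneg _) (hζ ▸ hnorm_inner_le hu₂) hz.1 hz.2
  have hden : ∀ z ∈ Set.Icc (0 : ℝ) 1, 0 < σ ^ 2 + b + (P₀ - Ps) * ‖g‖ ^ 2 * z :=
    fun z hz ↦ by have := hz.1; positivity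
  refine exists_isGreatest_of_le_of_attained isCompact_Icc (Set.nonempty_Icc.2 zero_le_one)
    ?_ (fun x hx ↦ ⟨sq_nonneg _, pow_le_one₀ (norm_nonneg _) (hnorm_inner_le hx)⟩) ?_ ?_
  · refine ContinuousOn.div ?_ (by fun_prop) fun z hz ↦ (hden z hz).ne'
    rw [funext hL]
    fun_prop
  · intro x hx
    rw [hL_sq _ ⟨sq_nonneg _, pow_le_one₀ (norm_nonneg _) (hnorm_inner_le hx)⟩, hζ]
    gcongr
    rw [Real.sqrt_sq (norm_nonneg _)]
    simpa only [hu₂, hx, one_pow] using norm_inner_le_of_norm_eq_one hu₁ u₂ x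
  · intro z hz
    obtain ⟨x, hx, hx₁, hx₂⟩ := exists_norm_eq_one_norm_inner_eq hE hu₁ hu₂ hz.1 hz.2
    exact ⟨x, hx, by rw [hx₁, hx₂, hL_sq z hz, hζ]⟩

/-- Reduction of the DF secrecy-rate maximization with one eavesdropper
to a one-dimensional maximization: the supremum over unit vectors `x` of
`(σ² + a + (P₀ − Pₛ)‖h‖²|⟨u₂,x⟩|²)/(σ² + b + (P₀ − Pₛ)‖g‖²|⟨u₁,x⟩|²)` equals the maximum
over `z ∈ [0,1]` of `(σ² + a + (P₀ − Pₛ)‖h‖² L(z))/(σ² + b + (P₀ − Pₛ)‖g‖² z)`,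
and both are attained. -/
theorem stmt6 {N : ℕ} (hN : 2 ≤ N)
    (h g : EuclideanSpace ℂ (Fin N)) (hh : h ≠ 0) (hg : g ≠ 0)
    (σ a b Ps P₀ : ℝ) (hσ : 0 < σ) (ha : 0 ≤ a) (hb : 0 ≤ b)
    (hPs0 : 0 ≤ Ps) (hPsP : Ps ≤ P₀)
    (ζ : ℝ) (hζ : ζ = ‖(inner ℂ (‖g‖⁻¹ • g) (‖h‖⁻¹ • h) : ℂ)‖)
    (L : ℝ → ℝ)
    (hL : ∀ z, L z = 1 - (ζ * Real.sqrt (1 - z) - Real.sqrt ((1 - ζ ^ 2) * z)) ^ 2) :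
    ∃ m : ℝ,
      IsGreatest {v : ℝ | ∃ x : EuclideanSpace ℂ (Fin N), ‖x‖ = 1 ∧
        v = (σ ^ 2 + a + (P₀ - Ps) * ‖h‖ ^ 2 *
              ‖(inner ℂ (‖h‖⁻¹ • h) x : ℂ)‖ ^ 2) /
            (σ ^ 2 + b + (P₀ - Ps) * ‖g‖ ^ 2 *
              ‖(inner ℂ (‖g‖⁻¹ • g) x : ℂ)‖ ^ 2)} m ∧
      IsGreatest {v : ℝ | ∃ z ∈ Set.Icc (0 : ℝ) 1,
        v = (σ ^ 2 + a + (P₀ - Ps) * ‖h‖ ^ 2 * L z) /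
            (σ ^ 2 + b + (P₀ - Ps) * ‖g‖ ^ 2 * z)} m :=
  stmt6_general hN h g hh hg σ a b Ps P₀ hσ hb hPsP ζ hζ L hL
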